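/- arXiv:1112.0642 — 2 statements merged into one kernel-verified Lean document; each statement's English description precedes it below -/
import Mathlib

section
/- Let (W,ε_W) be a directed midway-back avoided closed walk in a signed graph. Then W has no triple vertices: every vertex occurs at most twice among u_0, u_1, ..., u_{n-1} (indices of the closed walk taken with u_n = u_0 identified), and consequently every edge occurs at most twice in W. -/
open Finset

/-- An oriented signed graph: each edge has an ordered pair of end-vertices and
an orientation value (`±1`) at each of its two ends.  The sign of an edge `e` is
`-ε₁(e)·ε₂(e)`. -/
structure OSG (V E : Type) where
  ends : E → V × V
  eps : E → ℤ × ℤ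
  eps1 : ∀ e, (eps e).1 = 1 ∨ (eps e).1 = -1
  eps2 : ∀ e, (eps e).2 = 1 ∨ (eps e).2 = -1

namespace OSG

variable {V E : Type} [DecidableEq V] [DecidableEq E] [Fintype E]

/-- The sign `σ(e)` of an edge. -/
def sign (G : OSG V E) (e : E) : ℤ := -((G.eps e).1 * (G.eps e).2)

/-- Boundary of an integer-valued function at a vertex. -/
def boundary (G : OSG V E) (f : E → ℤ) (v : V) : ℤ :=
  ∑ e : E, ((if (G.ends e).1 = v then (G.eps e).1 * f e else 0) +
            (if (G.ends e).2 = v then (G.eps e).2 * f e else 0))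

/-- An integral flow: boundary vanishes at every vertex. -/
def IsFlow (G : OSG V E) (f : E → ℤ) : Prop := ∀ v, G.boundary f v = 0

/-- Boundary of a real-valued function at a vertex. -/
def boundaryR (G : OSG V E) (f : E → ℝ) (v : V) : ℝ :=
  ∑ e : E, ((if (G.ends e).1 = v then ((G.eps e).1 : ℝ) * f e else 0) +
            (if (G.ends e).2 = v then ((G.eps e).2 : ℝ) * f e else 0))

/-- A real flow. -/
def IsFlowR (G : OSG V E) (f : E → ℝ) : Prop := ∀ v, G.boundaryR f v = 0

/-- A walk of length `n`: vertices `u 0, …, u n`, edges `x 0, …, x (n-1)`, where the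
`i`-th edge joins `u i` and `u (i+1)`; `fwd i` records whether the edge is traversed
from its first end to its second end. -/
structure Walk (G : OSG V E) (n : ℕ) where
  u : Fin (n + 1) → V
  x : Fin n → E
  fwd : Fin n → Bool
  compat_t : ∀ i : Fin n, fwd i = true → G.ends (x i) = (u i.castSucc, u i.succ)
  compat_f : ∀ i : Fin n, fwd i = false → G.ends (x i) = (u i.succ, u i.castSucc)

variable {G : OSG V E}

/-- A closed walk. -/
def Walk.IsClosed {n : ℕ} (W : G.Walk n) : Prop := W.u 0 = W.u (Fin.last n)

/-- The sign of a walk: product of the signs of its edges with multiplicity. -/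
def Walk.sgn {n : ℕ} (W : G.Walk n) : ℤ := ∏ i : Fin n, G.sign (W.x i)

/-- The support (underlying edge set) of a walk. -/
def Walk.support {n : ℕ} (W : G.Walk n) : Finset E := Finset.image W.x Finset.univ

/-- The number of occurrences of an edge in a walk. -/
def Walk.edgeCount {n : ℕ} (W : G.Walk n) (e : E) : ℕ :=
  (Finset.univ.filter (fun i => W.x i = e)).card

/-- The edge multiset of a walk. -/
def Walk.edgeMultiset {n : ℕ} (W : G.Walk n) : Multiset E :=
  Multiset.map W.x Finset.univ.val

/-- A direction `ε_W` of a walk: `a i = ε_W(u_i, x_{i+1})` is the value at the initial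
vertex of the `i`-th edge, `b i = ε_W(u_{i+1}, x_{i+1})` the value at its terminal
vertex; consecutive incidence values at an internal vertex cancel. -/
structure Direction {n : ℕ} (W : G.Walk n) where
  a : Fin n → ℤ
  b : Fin n → ℤ
  a_unit : ∀ i, a i = 1 ∨ a i = -1
  b_unit : ∀ i, b i = 1 ∨ b i = -1
  edge_rel : ∀ i, a i * b i = - G.sign (W.x i)
  consec : ∀ (i : Fin n) (h : i.val + 1 < n), b i + a ⟨i.val + 1, h⟩ = 0

/-- The closing condition for a direction of a closed walk:
`ε_W(u_0,x_1) + ε_W(u_n,x_n) = 0`. -/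
def Direction.IsClosedDir {n : ℕ} {W : G.Walk n} (d : Direction W) (hn : 0 < n) : Prop :=
  d.a ⟨0, hn⟩ + d.b ⟨n - 1, by omega⟩ = 0

/-- Midway-back avoided: whenever `u_α = u_β` (`α < β < n`),
`ε_W(u_β, x_β) = ε_W(u_α, x_{α+1})`. -/
def Direction.MBA {n : ℕ} {W : G.Walk n} (d : Direction W) : Prop :=
  ∀ (α β : Fin n), α.val < β.val → W.u α.castSucc = W.u β.castSucc →
    d.b ⟨β.val - 1, by have := β.isLt; omega⟩ = d.a α

/-- The orientation that occurrence `i` of the walk induces on its edge, recorded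
as the pair of values at the first and second ends of the edge. -/
def Direction.occOrient {n : ℕ} {W : G.Walk n} (d : Direction W) (i : Fin n) : ℤ × ℤ :=
  if W.fwd i then (d.a i, d.b i) else (d.b i, d.a i)

/-- A directed Eulerian walk: a directed closed walk of positive sign whose direction
induces the same orientation on all occurrences of each repeated edge. -/
def Direction.IsEulerian {n : ℕ} {W : G.Walk n} (d : Direction W) (hn : 0 < n) : Prop :=
  W.IsClosed ∧ d.IsClosedDir hn ∧ W.sgn = 1 ∧
    ∀ p q : Fin n, W.x p = W.x q → d.occOrient p = d.occOrient q

/-- A minimal (directed) Eulerian walk: no Eulerian walk is properly contained in it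
as edge multisets. -/
def Direction.IsMinimalEulerian {n : ℕ} {W : G.Walk n} (d : Direction W) (hn : 0 < n) : Prop :=
  d.IsEulerian hn ∧
    ∀ (m : ℕ) (hm : 0 < m) (W' : G.Walk m) (d' : Direction W'),
      d'.IsEulerian hm → W'.edgeMultiset ≤ W.edgeMultiset →
        W'.edgeMultiset = W.edgeMultiset

/-- The coupling `[ε, ε_W](x_i)` of the ambient orientation with the walk direction at
occurrence `i` (computed at the terminal vertex of the occurrence). -/
def Direction.coupleAt {n : ℕ} {W : G.Walk n} (d : Direction W) (i : Fin n) : ℤ :=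
  (if W.fwd i then (G.eps (W.x i)).2 else (G.eps (W.x i)).1) * d.b i

/-- The characteristic vector `f_{(W,ε_W)}` of a directed walk. -/
def Direction.charVec {n : ℕ} {W : G.Walk n} (d : Direction W) : E → ℤ :=
  fun e => ∑ i : Fin n, if W.x i = e then d.coupleAt i else 0

/-- The reorientation `ε_f` of `G` along the negative edges of `f : E → ℝ`. -/
noncomputable def reorientR (G : OSG V E) (f : E → ℝ) : OSG V E where
  ends := G.ends
  eps := fun e => if f e < 0 then (-(G.eps e).1, -(G.eps e).2) else G.eps e
  eps1 := by
    intro e; by_cases h : f e < 0 <;> rcases G.eps1 e with h1 | h1 <;> simp [h, h1]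
  eps2 := by
    intro e; by_cases h : f e < 0 <;> rcases G.eps2 e with h1 | h1 <;> simp [h, h1]

/-- Vertex set spanned by an edge set. -/
def verts (G : OSG V E) (S : Finset E) : Finset V :=
  S.image (fun e => (G.ends e).1) ∪ S.image (fun e => (G.ends e).2)

/-- Adjacency via an edge of `S`. -/
def adjOn (G : OSG V E) (S : Finset E) (v w : V) : Prop :=
  ∃ e ∈ S, G.ends e = (v, w) ∨ G.ends e = (w, v)

/-- Reachability inside the subgraph induced by `S`. -/
def Reach (G : OSG V E) (S : Finset E) : V → V → Prop :=
  Relation.ReflTransGen (G.adjOn S)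

/-- Connectivity of the subgraph induced by `S`. -/
def ConnectedOn (G : OSG V E) (S : Finset E) : Prop :=
  ∀ v ∈ G.verts S, ∀ w ∈ G.verts S, G.Reach S v w

/-- `v` is a cut-point of the subgraph induced by `S`: two vertices of the subgraph,
distinct from `v`, are joined in the subgraph but not after deleting `v`. -/
def IsCutPoint (G : OSG V E) (S : Finset E) (v : V) : Prop :=
  ∃ a ∈ G.verts S, ∃ b ∈ G.verts S, a ≠ v ∧ b ≠ v ∧ G.Reach S a b ∧
    ¬ Relation.ReflTransGen (fun p q => p ≠ v ∧ q ≠ v ∧ G.adjOn S p q) a b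

/-- `S` is the edge set of a cycle (simple closed path). -/
def IsCycleSet (G : OSG V E) (S : Finset E) : Prop :=
  ∃ (n : ℕ) (W : G.Walk n), 0 < n ∧ W.IsClosed ∧ Function.Injective W.x ∧
    (∀ i j : Fin n, W.u i.castSucc = W.u j.castSucc → i = j) ∧ W.support = S

/-- `S` is the edge set of a simple path of positive length from `a` to `b`. -/
def IsPathSet (G : OSG V E) (S : Finset E) (a b : V) : Prop :=
  ∃ (n : ℕ) (W : G.Walk n), 0 < n ∧ W.u 0 = a ∧ W.u (Fin.last n) = b ∧
    Function.Injective W.u ∧ Function.Injective W.x ∧ W.support = S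

/-- The sign of an edge set (product of edge signs). -/
def signSet (G : OSG V E) (S : Finset E) : ℤ := ∏ e ∈ S, G.sign e

/-- The intersection vertices determined by a family of block cycles and block paths:
common vertices of two distinct block cycles, together with endpoints of block paths. -/
def interVertsOf (G : OSG V E) (cycles : Finset (Finset E))
    (paths : Finset (Finset E × V × V)) : Finset V :=
  (cycles.biUnion fun C => cycles.biUnion fun C' =>
      if C = C' then ∅ else G.verts C ∩ G.verts C') ∪
    paths.biUnion fun p => {p.2.1, p.2.2}

/-- A cycle-tree: a connected signed subgraph decomposed into edge-disjoint block
cycles (comprising all its cycles) and vertex-disjoint block paths (each of positive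
length, joining exactly two block cycles precisely at its endpoints), all of whose
intersection vertices are cut-points.  Block cycles may also meet directly in a single
common vertex (a block path of zero length). -/
structure CycleTree (G : OSG V E) where
  edges : Finset E
  cycles : Finset (Finset E)
  paths : Finset (Finset E × V × V)
  conn : G.ConnectedOn edges
  cycles_nonempty : cycles.Nonempty
  cyc_is : ∀ C ∈ cycles, G.IsCycleSet C
  cyc_all : ∀ C ⊆ edges, G.IsCycleSet C → C ∈ cycles
  path_is : ∀ p ∈ paths, G.IsPathSet p.1 p.2.1 p.2.2
  partition : edges = cycles.biUnion id ∪ paths.biUnion (fun p => p.1)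
  cyc_disj : ∀ C ∈ cycles, ∀ C' ∈ cycles, C ≠ C' → Disjoint C C'
  cyc_path_disj : ∀ C ∈ cycles, ∀ p ∈ paths, Disjoint C p.1
  path_vdisj : ∀ p ∈ paths, ∀ q ∈ paths, p ≠ q → Disjoint (G.verts p.1) (G.verts q.1)
  cyc_meet : ∀ C ∈ cycles, ∀ C' ∈ cycles, C ≠ C' → (G.verts C ∩ G.verts C').card ≤ 1
  path_meets : ∀ p ∈ paths, ∃ C1 ∈ cycles, ∃ C2 ∈ cycles, C1 ≠ C2 ∧
    G.verts C1 ∩ G.verts p.1 = {p.2.1} ∧ G.verts C2 ∩ G.verts p.1 = {p.2.2} ∧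
    ∀ C ∈ cycles, C ≠ C1 → C ≠ C2 → G.verts C ∩ G.verts p.1 = ∅
  cuts : ∀ v ∈ G.interVertsOf cycles paths, G.IsCutPoint edges v

namespace CycleTree

variable (T : CycleTree G)

/-- Intersection vertices of a cycle-tree. -/
def interVerts : Finset V := G.interVertsOf T.cycles T.paths

/-- Edges lying on block cycles. -/
def cycleEdges : Finset E := T.cycles.biUnion id

/-- Edges lying on block paths. -/
def pathEdges : Finset E := T.paths.biUnion (fun p => p.1)

/-- The indicator `I_T`: 1 on block-cycle edges, 2 on block-path edges, 0 elsewhere. -/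
def indicator : E → ℤ :=
  fun e => if e ∈ T.cycleEdges then 1 else if e ∈ T.pathEdges then 2 else 0

/-- The indicator `I_T`, valued in `ℕ`. -/
def indicatorNat : E → ℕ :=
  fun e => if e ∈ T.cycleEdges then 1 else if e ∈ T.pathEdges then 2 else 0

/-- The Parity Condition: each balanced block cycle carries an even number of
intersection vertices, each unbalanced block cycle an odd number. -/
def IsEulerian : Prop :=
  ∀ C ∈ T.cycles,
    if G.signSet C = 1 then Even ((G.verts C ∩ T.interVerts).card)
    else Odd ((G.verts C ∩ T.interVerts).card)

end CycleTree

/-- `v` is a sink of the orientation `o` on the subgraph `S`: all incidences at `v`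
have value `-1`. -/
def IsSinkAt (G : OSG V E) (S : Finset E) (o : E → ℤ × ℤ) (v : V) : Prop :=
  v ∈ G.verts S ∧ ∀ e ∈ S,
    ((G.ends e).1 = v → (o e).1 = -1) ∧ ((G.ends e).2 = v → (o e).2 = -1)

/-- `v` is a source of the orientation `o` on the subgraph `S`. -/
def IsSourceAt (G : OSG V E) (S : Finset E) (o : E → ℤ × ℤ) (v : V) : Prop :=
  v ∈ G.verts S ∧ ∀ e ∈ S,
    ((G.ends e).1 = v → (o e).1 = 1) ∧ ((G.ends e).2 = v → (o e).2 = 1)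

/-- A direction of a cycle-tree: an orientation of the subgraph with neither sink nor
source, whose restriction to each block cycle has a sink or a source at each
intersection vertex on that cycle. -/
def CycleTree.IsDirection (T : CycleTree G) (o : E → ℤ × ℤ) : Prop :=
  (∀ e ∈ T.edges, ((o e).1 = 1 ∨ (o e).1 = -1) ∧ (o e).1 * (o e).2 = - G.sign e) ∧
  (∀ v ∈ G.verts T.edges, ¬ G.IsSinkAt T.edges o v ∧ ¬ G.IsSourceAt T.edges o v) ∧
  (∀ C ∈ T.cycles, ∀ v ∈ G.verts C ∩ T.interVerts, G.IsSinkAt C o v ∨ G.IsSourceAt C o v)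

/-- The coupling `[ε, ε_T]` of the ambient orientation with an orientation `o` of the
subgraph `T`. -/
def CycleTree.coupling (T : CycleTree G) (o : E → ℤ × ℤ) : E → ℤ :=
  fun e => if e ∈ T.edges then (G.eps e).1 * (o e).1 else 0

/-- The blocks of a cycle-tree: block cycles and block paths, as edge sets. -/
def CycleTree.blocks (T : CycleTree G) : Finset (Finset E) :=
  T.cycles ∪ T.paths.image (fun p => p.1)

/-- A walk crosses from one block to another at each intersection vertex: consecutive
edges of the walk (cyclically) meeting at an intersection vertex never lie in the same
block. -/
def CycleTree.Crosses (T : CycleTree G) {n : ℕ} (W : G.Walk n) : Prop :=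
  ∀ i : Fin n, W.u i.succ ∈ T.interVerts →
    ∀ B ∈ T.blocks, ¬ (W.x i ∈ B ∧ W.x ⟨(i.val + 1) % n, Nat.mod_lt _ i.pos⟩ ∈ B)

/-- A circuit: an Eulerian cycle-tree containing no proper Eulerian sub-cycle-tree. -/
def IsCircuit (G : OSG V E) (T : CycleTree G) : Prop :=
  T.IsEulerian ∧ ∀ T' : CycleTree G, T'.IsEulerian → T'.edges ⊆ T.edges →
    T'.edges = T.edges

/-- Type I circuit: a single balanced cycle. -/
def CycleTree.TypeI (T : CycleTree G) : Prop :=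
  ∃ C, T.cycles = {C} ∧ T.paths = ∅ ∧ G.signSet C = 1

/-- Type II circuit: two edge-disjoint unbalanced cycles sharing exactly one vertex. -/
def CycleTree.TypeII (T : CycleTree G) : Prop :=
  ∃ C1 C2, C1 ≠ C2 ∧ T.cycles = {C1, C2} ∧ T.paths = ∅ ∧
    G.signSet C1 = -1 ∧ G.signSet C2 = -1 ∧ (G.verts C1 ∩ G.verts C2).card = 1

/-- Type III circuit: two vertex-disjoint unbalanced cycles joined by a simple path of
positive length. -/
def CycleTree.TypeIII (T : CycleTree G) : Prop :=
  ∃ C1 C2 P, C1 ≠ C2 ∧ T.cycles = {C1, C2} ∧ T.paths = {P} ∧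
    G.signSet C1 = -1 ∧ G.signSet C2 = -1 ∧ G.verts C1 ∩ G.verts C2 = ∅

/-- End-block cycles: block cycles carrying exactly one intersection vertex. -/
def CycleTree.endBlocks (T : CycleTree G) : Finset (Finset E) :=
  T.cycles.filter fun C => (G.verts C ∩ T.interVerts).card = 1

/-- Indecomposability of a nontrivial integral flow. -/
def Indecomposable (G : OSG V E) (f : E → ℤ) : Prop :=
  G.IsFlow f ∧ (∃ e, f e ≠ 0) ∧
    ¬ ∃ f1 f2 : E → ℤ, G.IsFlow f1 ∧ G.IsFlow f2 ∧ (∃ e, f1 e ≠ 0) ∧ (∃ e, f2 e ≠ 0) ∧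
        (∀ e, f e = f1 e + f2 e) ∧ (∀ e, 0 ≤ f1 e * f2 e)

/-- The coupling `[ε, ε_f]` for an integral function `f`: `-1` where `f < 0`, else `1`. -/
def couplingF (G : OSG V E) (f : E → ℤ) : E → ℤ := fun e => if f e < 0 then -1 else 1

end OSG
/-- a directed midway-back avoided closed walk has no triple vertices:
every vertex occurs at most twice among `u_0,…,u_{n-1}`, and every edge occurs at
most twice. -/
theorem OSG.mba_no_triple_vertices
    {V E : Type} [DecidableEq V] [DecidableEq E] [Fintype E] {G : OSG V E}
    {n : ℕ} (hn : 0 < n) (W : G.Walk n) (d : OSG.Direction W)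
    (hclosed : W.IsClosed) (hdir : d.IsClosedDir hn) (hmba : d.MBA) :
    (∀ v : V, (Finset.univ.filter (fun i : Fin n => W.u i.castSucc = v)).card ≤ 2) ∧
    (∀ e : E, W.edgeCount e ≤ 2) := by
  classical
  have hsgn : ∀ m : Fin n, G.sign (W.x m) = 1 ∨ G.sign (W.x m) = -1 := by
    intro m
    rcases G.eps1 (W.x m) with h1 | h1 <;> rcases G.eps2 (W.x m) with h2 | h2 <;>
      simp [OSG.sign, h1, h2]
  have hb : ∀ m : Fin n, d.b m = -G.sign (W.x m) * d.a m := by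
    intro m
    have h := d.edge_rel m
    rcases d.a_unit m with h1 | h1 <;> rw [h1] at h ⊢ <;> linarith
  have hnext : ∀ (m : Fin n) (h : (m.val + 1) % n < n),
      d.a ⟨(m.val + 1) % n, h⟩ = - d.b m := by
    intro m h
    by_cases hlt : m.val + 1 < n
    · have h3 : (⟨(m.val + 1) % n, h⟩ : Fin n) = ⟨m.val + 1, hlt⟩ :=
        Fin.ext (Nat.mod_eq_of_lt hlt)
      rw [h3]
      have := d.consec m hlt
      linarith
    · have hm : m.val + 1 = n := by have := m.isLt; omega
      have h3 : (⟨(m.val + 1) % n, h⟩ : Fin n) = ⟨0, hn⟩ :=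
        Fin.ext (show (m.val + 1) % n = 0 by rw [hm]; exact Nat.mod_self n)
      have h4 : m = ⟨n - 1, by omega⟩ := Fin.ext (show m.val = n - 1 by omega)
      have hd : d.a ⟨0, hn⟩ + d.b ⟨n - 1, by omega⟩ = 0 := hdir
      rw [h3, h4]
      linarith
  have hopp : ∀ α β : Fin n, α.val < β.val → W.u α.castSucc = W.u β.castSucc →
      d.a β = - d.a α := by
    intro α β hlt hu
    have hb1 : β.val - 1 < n := by have := β.isLt; omega
    have h1 : d.b ⟨β.val - 1, hb1⟩ = d.a α := hmba α β hlt hu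
    have h2 := d.consec ⟨β.val - 1, hb1⟩ (show β.val - 1 + 1 < n by have := β.isLt; omega)
    have h3 : (⟨β.val - 1 + 1, by have := β.isLt; omega⟩ : Fin n) = β :=
      Fin.ext (show β.val - 1 + 1 = β.val by omega)
    rw [h3] at h2
    linarith
  have hopp' : ∀ α β : Fin n, α ≠ β → W.u α.castSucc = W.u β.castSucc →
      d.a β = - d.a α := by
    intro α β hne hu
    have hv : α.val ≠ β.val := fun h => hne (Fin.ext h)
    rcases lt_or_gt_of_ne hv with h | h
    · exact hopp α β h hu
    · have := hopp β α h hu.symm; linarith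
  have hvert : ∀ v : V,
      (Finset.univ.filter (fun i : Fin n => W.u i.castSucc = v)).card ≤ 2 := by
    intro v
    by_contra hc
    push_neg at hc
    rw [Finset.two_lt_card] at hc
    obtain ⟨α, hα, β, hβ, γ, hγ, hab, hac, hbc⟩ := hc
    simp only [Finset.mem_filter, Finset.mem_univ, true_and] at hα hβ hγ
    have e1 := hopp' α β hab (hα.trans hβ.symm)
    have e2 := hopp' α γ hac (hα.trans hγ.symm)
    have e3 := hopp' β γ hbc (hβ.trans hγ.symm)
    rcases d.a_unit α with h | h <;> linarith
  refine ⟨hvert, ?_⟩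
  intro e
  by_contra hc
  push_neg at hc
  simp only [OSG.Walk.edgeCount] at hc
  rw [Finset.two_lt_card] at hc
  obtain ⟨i, hi, j, hj, k, hk, hij, hik, hjk⟩ := hc
  simp only [Finset.mem_filter, Finset.mem_univ, true_and] at hi hj hk
  have hn3 : 3 ≤ n := by
    have h1 : i.val ≠ j.val := fun h => hij (Fin.ext h)
    have h2 : i.val ≠ k.val := fun h => hik (Fin.ext h)
    have h3 : j.val ≠ k.val := fun h => hjk (Fin.ext h)
    have := i.isLt; have := j.isLt; have := k.isLt
    omega
  set v := (G.ends e).1 with hv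
  set w := (G.ends e).2 with hw
  have hends : ∀ m : Fin n, W.x m = e →
      (W.u m.castSucc = v ∧ W.u m.succ = w) ∨ (W.u m.castSucc = w ∧ W.u m.succ = v) := by
    intro m hm
    cases hf : W.fwd m with
    | true =>
      have h := W.compat_t m hf
      rw [hm] at h
      exact Or.inl ⟨by rw [hv, h], by rw [hw, h]⟩
    | false =>
      have h := W.compat_f m hf
      rw [hm] at h
      exact Or.inr ⟨by rw [hw, h], by rw [hv, h]⟩
  by_cases hvweq : v = w
  · have key : ∀ m : Fin n, W.x m = e → W.u m.castSucc = v := by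
      intro m hm
      rcases hends m hm with ⟨h1, _⟩ | ⟨h1, _⟩
      · exact h1
      · rw [h1, hvweq]
    have h3 : 2 < (Finset.univ.filter (fun i : Fin n => W.u i.castSucc = v)).card := by
      rw [Finset.two_lt_card]
      exact ⟨i, by simp [key i hi], j, by simp [key j hj], k, by simp [key k hk],
        hij, hik, hjk⟩
    have := hvert v; omega
  · have nvlt : ∀ m : Fin n, (m.val + 1) % n < n := fun m => Nat.mod_lt _ hn
    have hmod : ∀ m : Fin n, (m.val + 1) % n = if m.val + 1 = n then 0 else m.val + 1 := by
      intro m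
      split_ifs with h
      · rw [h, Nat.mod_self]
      · exact Nat.mod_eq_of_lt (by have := m.isLt; omega)
    have hun : ∀ (m : Fin n) (h : (m.val + 1) % n < n),
        W.u (Fin.castSucc ⟨(m.val + 1) % n, h⟩) = W.u m.succ := by
      intro m h
      by_cases hlt : m.val + 1 < n
      · congr 1
        apply Fin.ext
        simp [Nat.mod_eq_of_lt hlt]
      · have hm : m.val + 1 = n := by have := m.isLt; omega
        have h1 : (Fin.castSucc ⟨(m.val + 1) % n, h⟩ : Fin (n + 1)) = 0 := by
          apply Fin.ext
          simp [hm]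
        have h2 : (m.succ : Fin (n + 1)) = Fin.last n := by
          apply Fin.ext
          simp [hm]
        rw [h1, h2]
        exact hclosed
    have hsub : ∀ mA mB : Fin n, W.x mA = e → W.x mB = e →
        mB.val = (mA.val + 1) % n → W.u mB.castSucc = v → ¬ W.u mA.castSucc = v → False := by
      intro mA mB hxA hxB hAB huB huA
      rcases hends mA hxA with ⟨h1, _⟩ | ⟨hAw, hAv⟩
      · exact huA h1
      rcases hends mB hxB with ⟨_, hBw⟩ | ⟨hBw', _⟩
      swap
      · exact hvweq (huB.symm.trans hBw')
      have hnvB : (mB.val + 1) % n ≠ mA.val := by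
        have hm1 := hmod mA
        have hm2 := hmod mB
        rw [hm1] at hAB
        rw [hm2]
        have l1 := mA.isLt; have l2 := mB.isLt
        split_ifs at hAB ⊢ <;> omega
      have huw : W.u mA.castSucc = W.u (Fin.castSucc ⟨(mB.val + 1) % n, nvlt mB⟩) := by
        rw [hun mB (nvlt mB), hBw, hAw]
      have hne' : mA ≠ (⟨(mB.val + 1) % n, nvlt mB⟩ : Fin n) := by
        intro hh
        exact hnvB (congrArg Fin.val hh).symm
      have e3 := hopp' mA ⟨(mB.val + 1) % n, nvlt mB⟩ hne' huw
      have e1 : d.a mB = G.sign e * d.a mA := by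
        have h1 := hnext mA (nvlt mA)
        have h2 : (⟨(mA.val + 1) % n, nvlt mA⟩ : Fin n) = mB := Fin.ext hAB.symm
        rw [h2] at h1
        have h3 := hb mA
        rw [hxA] at h3
        rw [h1, h3]; ring
      have e2 : d.a ⟨(mB.val + 1) % n, nvlt mB⟩ = G.sign e * d.a mB := by
        have h1 := hnext mB (nvlt mB)
        have h3 := hb mB
        rw [hxB] at h3
        rw [h1, h3]; ring
      have hσ : G.sign e = 1 ∨ G.sign e = -1 := by
        have := hsgn mA; rwa [hxA] at this
      rcases hσ with h | h <;> rcases d.a_unit mA with h' | h' <;>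
        rw [h] at e1 e2 <;> rw [h'] at e1 e3 <;> linarith
    have hsv : ∀ m : Fin n, W.x m = e → ∃ s : Fin n, W.u s.castSucc = v ∧
        (s = m ∨ (s.val = (m.val + 1) % n ∧ ¬ W.u m.castSucc = v)) := by
      intro m hm
      by_cases h : W.u m.castSucc = v
      · exact ⟨m, h, Or.inl rfl⟩
      · refine ⟨⟨(m.val + 1) % n, nvlt m⟩, ?_, Or.inr ⟨rfl, h⟩⟩
        rw [hun m (nvlt m)]
        rcases hends m hm with ⟨h1, _⟩ | ⟨_, h2⟩
        · exact absurd h1 h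
        · exact h2
    obtain ⟨si, hsi, hsi'⟩ := hsv i hi
    obtain ⟨sj, hsj, hsj'⟩ := hsv j hj
    obtain ⟨sk, hsk, hsk'⟩ := hsv k hk
    have hpig : si = sj ∨ si = sk ∨ sj = sk := by
      by_contra hcc
      push_neg at hcc
      have h3 : 2 < (Finset.univ.filter (fun i : Fin n => W.u i.castSucc = v)).card := by
        rw [Finset.two_lt_card]
        exact ⟨si, by simp [hsi], sj, by simp [hsj], sk, by simp [hsk],
          hcc.1, hcc.2.1, hcc.2.2⟩
      have := hvert v; omega
    have core : ∀ m1 m2 s1 s2 : Fin n, m1 ≠ m2 → W.x m1 = e → W.x m2 = e →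
        W.u s1.castSucc = v → W.u s2.castSucc = v →
        (s1 = m1 ∨ (s1.val = (m1.val + 1) % n ∧ ¬ W.u m1.castSucc = v)) →
        (s2 = m2 ∨ (s2.val = (m2.val + 1) % n ∧ ¬ W.u m2.castSucc = v)) →
        s1 = s2 → False := by
      intro m1 m2 s1 s2 hne hx1 hx2 hu1 hu2 hc1 hc2 hs
      rcases hc1 with h1 | ⟨hc1, hnv1⟩ <;> rcases hc2 with h2 | ⟨hc2, hnv2⟩
      · apply hne; rw [← h1, ← h2]; exact hs
      · refine hsub m2 m1 hx2 hx1 ?_ (h1 ▸ hu1) hnv2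
        rw [← h1, hs]; exact hc2
      · refine hsub m1 m2 hx1 hx2 ?_ (h2 ▸ hu2) hnv1
        rw [← h2, ← hs]; exact hc1
      · apply hne; apply Fin.ext
        have hmm : (m1.val + 1) % n = (m2.val + 1) % n := by
          rw [← hc1, ← hc2, hs]
        have hv1 := hmod m1; have hv2 := hmod m2
        rw [hv1, hv2] at hmm
        have l1 := m1.isLt; have l2 := m2.isLt
        split_ifs at hmm <;> omega
    rcases hpig with h | h | h
    · exact core i j si sj hij hi hj hsi hsj hsi' hsj' h
    · exact core i k si sk hik hi hk hsi hsk hsi' hsk' h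
    · exact core j k sj sk hjk hj hk hsj hsk hsj' hsk' h
end

section
/- Every signed-graph circuit (an Eulerian cycle-tree containing no proper Eulerian sub-cycle-tree) is of exactly one of three types: (I) a single balanced cycle; (II) two edge-disjoint unbalanced cycles sharing exactly one common vertex; (III) two vertex-disjoint unbalanced cycles joined by a simple path of positive length meeting each cycle only at its respective endpoint. -/
/-!
A circuit contains no smaller Eulerian cycle-tree, so it is enough to find, among the blocks
of an Eulerian cycle-tree `T`, a sub-cycle-tree of one of the three shapes that is itself
Eulerian: minimality then makes it all of `T`. A balanced block cycle alone is one (Type I).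
If every block cycle is unbalanced and there is a block path, the two block cycles it joins
form one together with the path when they are disjoint (Type III); if they met, the two
cycles alone would already be a smaller one. Without block paths, the Parity Condition puts an
intersection vertex on every block cycle; being a cut-point, it lies on two block cycles that
each have a further vertex, and these two cycles form one (Type II). The cut-point condition is
also what rules out degenerate attachments such as a loop at the end of a block path.
-/

open Finset

namespace OSG

variable {V E : Type} {G : OSG V E}

theorem reflTransGen_symm {α : Type*} {r : α → α → Prop} (hr : ∀ {a b}, r a b → r b a)
    {a b : α} (h : Relation.ReflTransGen r a b) : Relation.ReflTransGen r b a :=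
  Relation.reflTransGen_swap.1 (Relation.ReflTransGen.mono (fun _ _ h => hr h) _ _ h)

theorem adjOn_symm {S : Finset E} {v w : V} (h : G.adjOn S v w) : G.adjOn S w v :=
  let ⟨e, he, h⟩ := h
  ⟨e, he, h.symm⟩

theorem adjOn_mono {S S' : Finset E} (hS : S ⊆ S') {v w : V} (h : G.adjOn S v w) :
    G.adjOn S' v w :=
  let ⟨e, he, h⟩ := h
  ⟨e, hS he, h⟩

theorem reach_symm {S : Finset E} {v w : V} (h : G.Reach S v w) : G.Reach S w v :=
  reflTransGen_symm adjOn_symm h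

theorem reach_mono {S S' : Finset E} (hS : S ⊆ S') {v w : V} (h : G.Reach S v w) :
    G.Reach S' v w :=
  Relation.ReflTransGen.mono (fun _ _ => adjOn_mono hS) _ _ h

def adjOnAvoiding (G : OSG V E) (S : Finset E) (a p q : V) : Prop :=
  p ≠ a ∧ q ≠ a ∧ G.adjOn S p q

theorem adjOnAvoiding_symm {S : Finset E} {a v w : V} (h : G.adjOnAvoiding S a v w) :
    G.adjOnAvoiding S a w v :=
  ⟨h.2.1, h.1, adjOn_symm h.2.2⟩

theorem reach_adjOnAvoiding_mono {S S' : Finset E} (hS : S ⊆ S') {a v w : V}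
    (h : Relation.ReflTransGen (G.adjOnAvoiding S a) v w) :
    Relation.ReflTransGen (G.adjOnAvoiding S' a) v w :=
  Relation.ReflTransGen.mono (fun _ _ h => ⟨h.1, h.2.1, adjOn_mono hS h.2.2⟩) _ _ h

theorem sign_eq_one_or_neg_one (e : E) : G.sign e = 1 ∨ G.sign e = -1 := by
  rcases G.eps1 e with h1 | h1 <;> rcases G.eps2 e with h2 | h2 <;> simp [sign, h1, h2]

theorem signSet_eq_one_or_neg_one (S : Finset E) : G.signSet S = 1 ∨ G.signSet S = -1 :=
  Finset.prod_induction _ (fun x => x = 1 ∨ x = -1)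
    (by rintro _ _ (rfl | rfl) (rfl | rfl) <;> norm_num) (Or.inl rfl)
    (fun e _ => sign_eq_one_or_neg_one e)

namespace Walk

variable {n : ℕ}

theorem ends_or (W : G.Walk n) (i : Fin n) :
    G.ends (W.x i) = (W.u i.castSucc, W.u i.succ) ∨
      G.ends (W.x i) = (W.u i.succ, W.u i.castSucc) := by
  cases hf : W.fwd i
  · exact Or.inr (W.compat_f i hf)
  · exact Or.inl (W.compat_t i hf)

def reverse (W : G.Walk n) : G.Walk n where
  u j := W.u j.rev
  x i := W.x i.rev
  fwd i := !W.fwd i.rev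
  compat_t i h := by
    rw [Fin.rev_castSucc, Fin.rev_succ]
    exact W.compat_f _ (by simpa using h)
  compat_f i h := by
    rw [Fin.rev_castSucc, Fin.rev_succ]
    exact W.compat_t _ (by simpa using h)

def vertexMod (W : G.Walk n) (hn : 0 < n) (m : ℕ) : V :=
  W.u ⟨m % n, Nat.lt_succ_of_lt (Nat.mod_lt m hn)⟩

theorem vertexMod_mod (W : G.Walk n) (hn : 0 < n) (m : ℕ) :
    W.vertexMod hn (m % n) = W.vertexMod hn m := by
  simp only [vertexMod, Nat.mod_mod]

theorem vertexMod_add_self (W : G.Walk n) (hn : 0 < n) (m : ℕ) :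
    W.vertexMod hn (m + n) = W.vertexMod hn m := by
  simp only [vertexMod, Nat.add_mod_right]

theorem IsClosed.vertexMod_val {W : G.Walk n} (hW : W.IsClosed) (hn : 0 < n) (j : Fin (n + 1)) :
    W.vertexMod hn j = W.u j := by
  rcases Nat.lt_or_ge j n with hj | hj
  · simp only [vertexMod, Nat.mod_eq_of_lt hj]
  · have hjn : j = Fin.last n := Fin.ext (by simp; omega)
    subst hjn
    rw [← show W.u 0 = W.u (Fin.last n) from hW]
    simp [vertexMod]

theorem mod_eq_of_vertexMod_eq {W : G.Walk n} (hn : 0 < n)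
    (hW : ∀ i j : Fin n, W.u i.castSucc = W.u j.castSucc → i = j) {m m' : ℕ}
    (h : W.vertexMod hn m = W.vertexMod hn m') : m % n = m' % n :=
  congrArg Fin.val (hW ⟨m % n, Nat.mod_lt m hn⟩ ⟨m' % n, Nat.mod_lt m' hn⟩ h)

theorem vertexMod_ne {W : G.Walk n} (hn : 0 < n)
    (hW : ∀ i j : Fin n, W.u i.castSucc = W.u j.castSucc → i = j) {k t : ℕ} (hk : k < n)
    (hkt : k < t) (htk : t < k + n) : W.vertexMod hn t ≠ W.vertexMod hn k := by
  intro h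
  have hmod := mod_eq_of_vertexMod_eq hn hW h
  rw [Nat.mod_eq_of_lt hk] at hmod
  rcases Nat.lt_or_ge t n with htn | htn
  · rw [Nat.mod_eq_of_lt htn] at hmod
    omega
  · rw [Nat.mod_eq_sub_mod htn, Nat.mod_eq_of_lt (by omega)] at hmod
    omega

end Walk

section verts

variable [DecidableEq V]

theorem mem_verts_iff {S : Finset E} {v : V} : v ∈ G.verts S ↔ ∃ w, G.adjOn S v w := by
  simp only [verts, adjOn, Finset.mem_union, Finset.mem_image]
  constructor
  · rintro (⟨e, he, rfl⟩ | ⟨e, he, rfl⟩)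
    · exact ⟨_, e, he, Or.inl rfl⟩
    · exact ⟨_, e, he, Or.inr rfl⟩
  · rintro ⟨w, e, he, h | h⟩
    · exact Or.inl ⟨e, he, by rw [h]⟩
    · exact Or.inr ⟨e, he, by rw [h]⟩

theorem mem_verts_of_adjOn {S : Finset E} {v w : V} (h : G.adjOn S v w) : v ∈ G.verts S :=
  mem_verts_iff.2 ⟨w, h⟩

theorem fst_mem_verts {S : Finset E} {e : E} (he : e ∈ S) : (G.ends e).1 ∈ G.verts S :=
  mem_verts_of_adjOn ⟨e, he, Or.inl rfl⟩

/-- A walk between two vertices other than `a` is rerouted around `a` by joining, at each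
visit of `a`, the neighbours before and after it. -/
theorem not_isCutPoint_of_reach_adjOnAvoiding {S : Finset E} {a : V}
    (h : ∀ z w, z ≠ a → w ≠ a → G.adjOn S z a → G.adjOn S a w →
      Relation.ReflTransGen (G.adjOnAvoiding S a) z w) :
    ¬ G.IsCutPoint S a := by
  rintro ⟨x, -, y, -, hxa, hya, hxy, hnot⟩
  have key : ∀ v, G.Reach S x v →
      (v ≠ a ∧ Relation.ReflTransGen (G.adjOnAvoiding S a) x v) ∨
        (v = a ∧ ∃ z, z ≠ a ∧ G.adjOn S z a ∧
          Relation.ReflTransGen (G.adjOnAvoiding S a) x z) := by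
    intro v hv
    induction hv with
    | refl => exact Or.inl ⟨hxa, .refl⟩
    | @tail v w _ hvw ih =>
      by_cases hwa : w = a
      · rcases ih with ⟨hva, hxv⟩ | ⟨-, hz⟩
        · exact Or.inr ⟨hwa, v, hva, hwa ▸ hvw, hxv⟩
        · exact Or.inr ⟨hwa, hz⟩
      · rcases ih with ⟨hva, hxv⟩ | ⟨hva, z, hza, hz, hxz⟩
        · exact Or.inl ⟨hwa, hxv.tail ⟨hva, hwa, hvw⟩⟩
        · exact Or.inl ⟨hwa, hxz.trans (h z w hza hwa hz (hva ▸ hvw))⟩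
  rcases key y hxy with ⟨-, hxy'⟩ | ⟨hy, -⟩
  · exact hnot hxy'
  · exact hya hy

variable [DecidableEq E]

theorem verts_union (S S' : Finset E) : G.verts (S ∪ S') = G.verts S ∪ G.verts S' := by
  ext v
  simp only [verts, Finset.image_union, Finset.mem_union]
  tauto

theorem connectedOn_union {S S' : Finset E} {c : V} (hS : G.ConnectedOn S)
    (hS' : G.ConnectedOn S') (hc : c ∈ G.verts S) (hc' : c ∈ G.verts S') :
    G.ConnectedOn (S ∪ S') := by
  have hreach : ∀ v ∈ G.verts (S ∪ S'), G.Reach (S ∪ S') v c := by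
    intro v hv
    rw [verts_union, Finset.mem_union] at hv
    rcases hv with hv | hv
    · exact reach_mono Finset.subset_union_left (hS v hv c hc)
    · exact reach_mono Finset.subset_union_right (hS' v hv c hc')
  exact fun v hv w hw => (hreach v hv).trans (reach_symm (hreach w hw))

theorem isCutPoint_union {S₁ S₂ : Finset E} {v x y : V} (hconn : G.ConnectedOn (S₁ ∪ S₂))
    (hinter : G.verts S₁ ∩ G.verts S₂ ⊆ {v}) (hx : x ∈ G.verts S₁) (hy : y ∈ G.verts S₂)
    (hxv : x ≠ v) (hyv : y ≠ v) : G.IsCutPoint (S₁ ∪ S₂) v := by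
  have hx' : x ∈ G.verts (S₁ ∪ S₂) := by rw [verts_union]; exact Finset.mem_union_left _ hx
  have hy' : y ∈ G.verts (S₁ ∪ S₂) := by rw [verts_union]; exact Finset.mem_union_right _ hy
  refine ⟨x, hx', y, hy', hxv, hyv, hconn x hx' y hy', fun hxy => ?_⟩
  have hstay : ∀ z, Relation.ReflTransGen (G.adjOnAvoiding (S₁ ∪ S₂) v) x z →
      z ∈ G.verts S₁ := by
    intro z hz
    induction hz with
    | refl => exact hx
    | @tail p q _ hpq ih =>
      obtain ⟨hpv, -, e, he, hends⟩ := hpq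
      rcases Finset.mem_union.1 he with he | he
      · exact mem_verts_of_adjOn (adjOn_symm ⟨e, he, hends⟩)
      · have hp : p ∈ G.verts S₁ ∩ G.verts S₂ :=
          Finset.mem_inter.2 ⟨ih, mem_verts_of_adjOn ⟨e, he, hends⟩⟩
        exact absurd (Finset.mem_singleton.1 (hinter hp)) hpv
  exact hyv (Finset.mem_singleton.1 (hinter (Finset.mem_inter.2 ⟨hstay y hxy, hy⟩)))

theorem isCutPoint_union_union {A P B : Finset E} {c x y : V}
    (hconn : G.ConnectedOn (A ∪ (P ∪ B))) (hAP : G.verts A ∩ G.verts P = {c})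
    (hAB : G.verts A ∩ G.verts B = ∅) (hx : x ∈ G.verts A) (hxc : x ≠ c)
    (hy : y ∈ G.verts B) : G.IsCutPoint (A ∪ (P ∪ B)) c := by
  have hc := (Finset.mem_inter.1 (hAP ▸ Finset.mem_singleton_self c)).1
  refine isCutPoint_union hconn ?_ hx (by rw [verts_union]; exact Finset.mem_union_right _ hy)
    hxc ?_
  · rw [verts_union, Finset.inter_union_distrib_left, hAP, hAB, Finset.union_empty]
  · rintro rfl
    exact Finset.notMem_empty _ (hAB ▸ Finset.mem_inter.2 ⟨hc, hy⟩)

end verts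

section walks

variable [DecidableEq E] {n : ℕ}

theorem Walk.adjOn_support (W : G.Walk n) (i : Fin n) :
    G.adjOn W.support (W.u i.castSucc) (W.u i.succ) :=
  ⟨W.x i, Finset.mem_image_of_mem _ (Finset.mem_univ i), W.ends_or i⟩

theorem Walk.exists_of_adjOn_support {W : G.Walk n} {v w : V} (h : G.adjOn W.support v w) :
    ∃ i : Fin n, (v = W.u i.castSucc ∧ w = W.u i.succ) ∨
      (v = W.u i.succ ∧ w = W.u i.castSucc) := by
  obtain ⟨e, he, hvw⟩ := h
  obtain ⟨i, -, rfl⟩ := Finset.mem_image.1 he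
  refine ⟨i, ?_⟩
  rcases W.ends_or i with hi | hi <;> rw [hi] at hvw <;>
    rcases hvw with hvw | hvw <;> simp only [Prod.mk.injEq] at hvw <;>
    simp only [hvw, and_self, or_true, true_or]

theorem Walk.reach_u_zero (W : G.Walk n) (j : Fin (n + 1)) :
    G.Reach W.support (W.u 0) (W.u j) := by
  induction j using Fin.induction with
  | zero => exact .refl
  | succ i ih => exact ih.tail (W.adjOn_support i)

theorem Walk.support_reverse (W : G.Walk n) : W.reverse.support = W.support := by
  ext e
  simp only [support, reverse, Finset.mem_image, Finset.mem_univ, true_and]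
  exact ⟨fun ⟨i, h⟩ => ⟨i.rev, h⟩, fun ⟨i, h⟩ => ⟨i.rev, by simpa using h⟩⟩

theorem Walk.IsClosed.adjOn_vertexMod {W : G.Walk n} (hW : W.IsClosed) (hn : 0 < n) (m : ℕ) :
    G.adjOn W.support (W.vertexMod hn m) (W.vertexMod hn (m + 1)) := by
  have hsucc : W.u (Fin.succ ⟨m % n, Nat.mod_lt m hn⟩) = W.vertexMod hn (m + 1) := by
    have hmod : (m % n + 1) % n = (m + 1) % n := by
      rw [Nat.add_mod, Nat.mod_mod, ← Nat.add_mod]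
    rw [← W.vertexMod_mod hn (m + 1), ← hmod, W.vertexMod_mod]
    exact (hW.vertexMod_val hn _).symm
  exact hsucc ▸ W.adjOn_support ⟨m % n, Nat.mod_lt m hn⟩

namespace IsPathSet

variable {P : Finset E} {a b : V}

theorem nonempty (h : G.IsPathSet P a b) : P.Nonempty := by
  obtain ⟨n, W, hn, -, -, -, -, rfl⟩ := h
  exact ⟨W.x ⟨0, hn⟩, Finset.mem_image_of_mem _ (Finset.mem_univ _)⟩

theorem symm (h : G.IsPathSet P a b) : G.IsPathSet P b a := by
  obtain ⟨n, W, hn, ha, hb, hu, hx, rfl⟩ := h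
  refine ⟨n, W.reverse, hn, ?_, ?_, hu.comp Fin.rev_injective, hx.comp Fin.rev_injective,
    W.support_reverse⟩
  · simpa [Walk.reverse] using hb
  · simpa [Walk.reverse] using ha

theorem ne (h : G.IsPathSet P a b) : a ≠ b := by
  obtain ⟨n, W, hn, rfl, hb, hu, -, -⟩ := h
  intro hab
  have := congrArg Fin.val (hu (hab.trans hb.symm))
  simp at this
  omega

theorem exists_forall_adjOn_left (h : G.IsPathSet P a b) :
    ∃ w, ∀ z, G.adjOn P a z → z = w := by
  obtain ⟨n, W, hn, rfl, -, hu, -, rfl⟩ := h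
  refine ⟨W.u (Fin.succ ⟨0, hn⟩), fun z hz => ?_⟩
  obtain ⟨i, ⟨ha, rfl⟩ | ⟨ha, -⟩⟩ := Walk.exists_of_adjOn_support hz
  · have hi : (0 : Fin (n + 1)) = i.castSucc := hu ha
    obtain rfl : i = ⟨0, hn⟩ := Fin.ext (by simpa using (congrArg Fin.val hi).symm)
    rfl
  · exact absurd (hu ha).symm (Fin.succ_ne_zero i)

theorem exists_forall_adjOn (h : G.IsPathSet P a b) {c : V} (hc : c = a ∨ c = b) :
    ∃ w, ∀ z, G.adjOn P c z → z = w := by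
  rcases hc with rfl | rfl
  exacts [h.exists_forall_adjOn_left, h.symm.exists_forall_adjOn_left]

end IsPathSet

theorem IsCycleSet.nonempty {C : Finset E} (h : G.IsCycleSet C) : C.Nonempty := by
  obtain ⟨n, W, hn, -, -, -, rfl⟩ := h
  exact ⟨W.x ⟨0, hn⟩, Finset.mem_image_of_mem _ (Finset.mem_univ _)⟩

end walks

variable [DecidableEq V] [DecidableEq E]

theorem Walk.exists_eq_u_of_mem_verts {n : ℕ} {W : G.Walk n} {v : V}
    (h : v ∈ G.verts W.support) : ∃ j, v = W.u j := by
  obtain ⟨w, hvw⟩ := mem_verts_iff.1 h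
  obtain ⟨i, ⟨rfl, -⟩ | ⟨rfl, -⟩⟩ := Walk.exists_of_adjOn_support hvw
  exacts [⟨_, rfl⟩, ⟨_, rfl⟩]

theorem Walk.connectedOn_support {n : ℕ} (W : G.Walk n) : G.ConnectedOn W.support := by
  intro v hv w hw
  obtain ⟨j, rfl⟩ := Walk.exists_eq_u_of_mem_verts hv
  obtain ⟨k, rfl⟩ := Walk.exists_eq_u_of_mem_verts hw
  exact (reach_symm (W.reach_u_zero j)).trans (W.reach_u_zero k)

namespace IsPathSet

variable {P : Finset E} {a b : V}

theorem connectedOn (h : G.IsPathSet P a b) : G.ConnectedOn P := by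
  obtain ⟨n, W, -, -, -, -, -, rfl⟩ := h
  exact W.connectedOn_support

theorem left_mem_verts (h : G.IsPathSet P a b) : a ∈ G.verts P := by
  obtain ⟨n, W, hn, rfl, -, -, -, rfl⟩ := h
  exact mem_verts_of_adjOn (W.adjOn_support ⟨0, hn⟩)

theorem right_mem_verts (h : G.IsPathSet P a b) : b ∈ G.verts P :=
  h.symm.left_mem_verts

end IsPathSet

namespace IsCycleSet

variable {C : Finset E}

theorem connectedOn (h : G.IsCycleSet C) : G.ConnectedOn C := by
  obtain ⟨n, W, -, -, -, -, rfl⟩ := h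
  exact W.connectedOn_support

/-- Going round the cycle from the successor of `a` meets every other vertex before
returning to `a`. -/
theorem reach_adjOnAvoiding (h : G.IsCycleSet C) {a z w : V} (ha : a ∈ G.verts C)
    (hz : z ∈ G.verts C) (hw : w ∈ G.verts C) (hza : z ≠ a) (hwa : w ≠ a) :
    Relation.ReflTransGen (G.adjOnAvoiding C a) z w := by
  obtain ⟨n, W, hn, hcl, -, hu, rfl⟩ := h
  have hvert : ∀ v ∈ G.verts W.support, ∃ m < n, v = W.vertexMod hn m := by
    intro v hv
    obtain ⟨j, rfl⟩ := Walk.exists_eq_u_of_mem_verts hv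
    exact ⟨j % n, Nat.mod_lt _ hn, by rw [W.vertexMod_mod, hcl.vertexMod_val]⟩
  obtain ⟨k, hk, rfl⟩ := hvert a ha
  have hne : ∀ t, k < t → t < k + n → W.vertexMod hn t ≠ W.vertexMod hn k :=
    fun _ => Walk.vertexMod_ne hn hu hk
  have harc : ∀ d, d + 1 < n → Relation.ReflTransGen (G.adjOnAvoiding W.support
      (W.vertexMod hn k)) (W.vertexMod hn (k + 1)) (W.vertexMod hn (k + 1 + d)) := by
    intro d
    induction d with
    | zero => exact fun _ => .refl
    | succ d ih =>
      intro hd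
      exact (ih (by omega)).tail ⟨hne _ (by omega) (by omega), hne _ (by omega) (by omega),
        hcl.adjOn_vertexMod hn _⟩
  have hreach : ∀ m < n, W.vertexMod hn m ≠ W.vertexMod hn k →
      Relation.ReflTransGen (G.adjOnAvoiding W.support (W.vertexMod hn k))
        (W.vertexMod hn (k + 1)) (W.vertexMod hn m) := by
    intro m hm hmk
    rcases lt_trichotomy m k with hlt | rfl | hgt
    · have h' := harc (m + n - k - 1) (by omega)
      rwa [show k + 1 + (m + n - k - 1) = m + n by omega, W.vertexMod_add_self] at h'
    · exact absurd rfl hmk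
    · have h' := harc (m - k - 1) (by omega)
      rwa [show k + 1 + (m - k - 1) = m by omega] at h'
  obtain ⟨m₁, hm₁, rfl⟩ := hvert z hz
  obtain ⟨m₂, hm₂, rfl⟩ := hvert w hw
  exact (reflTransGen_symm adjOnAvoiding_symm (hreach m₁ hm₁ hza)).trans (hreach m₂ hm₂ hwa)

end IsCycleSet

namespace CycleTree

variable (T : CycleTree G)

theorem cycle_subset_edges {C : Finset E} (hC : C ∈ T.cycles) : C ⊆ T.edges := by
  rw [T.partition]
  exact fun e he => Finset.mem_union_left _ (Finset.mem_biUnion.2 ⟨C, hC, he⟩)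

theorem path_subset_edges {p : Finset E × V × V} (hp : p ∈ T.paths) : p.1 ⊆ T.edges := by
  rw [T.partition]
  exact fun e he => Finset.mem_union_right _ (Finset.mem_biUnion.2 ⟨p, hp, he⟩)

theorem biUnion_subset_edges {cs : Finset (Finset E)} {ps : Finset (Finset E × V × V)}
    (hcs : cs ⊆ T.cycles) (hps : ps ⊆ T.paths) :
    cs.biUnion id ∪ ps.biUnion Prod.fst ⊆ T.edges := by
  rw [T.partition]
  exact Finset.union_subset_union (Finset.biUnion_subset_biUnion_of_subset_left _ hcs)
    (Finset.biUnion_subset_biUnion_of_subset_left _ hps)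

theorem adjOn_edges {v w : V} (h : G.adjOn T.edges v w) :
    (∃ C ∈ T.cycles, G.adjOn C v w) ∨ ∃ p ∈ T.paths, G.adjOn p.1 v w := by
  obtain ⟨e, he, hvw⟩ := h
  rw [T.partition, Finset.mem_union, Finset.mem_biUnion, Finset.mem_biUnion] at he
  rcases he with ⟨C, hC, he⟩ | ⟨p, hp, he⟩
  exacts [Or.inl ⟨C, hC, e, he, hvw⟩, Or.inr ⟨p, hp, e, he, hvw⟩]

theorem path_end_mem_interVerts {p : Finset E × V × V} (hp : p ∈ T.paths) {a : V}
    (ha : a = p.2.1 ∨ a = p.2.2) : a ∈ T.interVerts := by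
  simp only [interVerts, interVertsOf, Finset.mem_union, Finset.mem_biUnion]
  exact Or.inr ⟨p, hp, by simpa using ha⟩

theorem verts_inter_eq_singleton {C₁ C₂ : Finset E} (h₁ : C₁ ∈ T.cycles) (h₂ : C₂ ∈ T.cycles)
    (hne : C₁ ≠ C₂) {a : V} (ha : a ∈ G.verts C₁ ∩ G.verts C₂) :
    G.verts C₁ ∩ G.verts C₂ = {a} :=
  Finset.eq_singleton_iff_unique_mem.2
    ⟨ha, fun b hb => Finset.card_le_one.1 (T.cyc_meet C₁ h₁ C₂ h₂ hne) b hb a ha⟩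

/-- A block path meets the block cycles only at its ends, one cycle at each end. -/
theorem cycle_eq_of_mem_verts_path {p : Finset E × V × V} (hp : p ∈ T.paths) {v : V}
    (hvp : v ∈ G.verts p.1) {D D' : Finset E} (hD : D ∈ T.cycles) (hD' : D' ∈ T.cycles)
    (hv : v ∈ G.verts D) (hv' : v ∈ G.verts D') : D = D' := by
  obtain ⟨C₁, -, C₂, -, -, hm₁, hm₂, hother⟩ := T.path_meets p hp
  have hcases : ∀ B ∈ T.cycles, v ∈ G.verts B → (B = C₁ ∧ v = p.2.1) ∨ (B = C₂ ∧ v = p.2.2) := by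
    intro B hB hvB
    have hvB' : v ∈ G.verts B ∩ G.verts p.1 := Finset.mem_inter.2 ⟨hvB, hvp⟩
    by_cases hB₁ : B = C₁
    · exact Or.inl ⟨hB₁, Finset.mem_singleton.1 (hm₁ ▸ hB₁ ▸ hvB')⟩
    by_cases hB₂ : B = C₂
    · exact Or.inr ⟨hB₂, Finset.mem_singleton.1 (hm₂ ▸ hB₂ ▸ hvB')⟩
    simp [hother B hB hB₁ hB₂] at hvB'
  have hends := (T.path_is p hp).ne
  rcases hcases D hD hv with ⟨rfl, h⟩ | ⟨rfl, h⟩ <;>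
    rcases hcases D' hD' hv' with ⟨rfl, h'⟩ | ⟨rfl, h'⟩
  all_goals first
    | rfl
    | exact absurd (h.symm.trans h') hends
    | exact absurd (h'.symm.trans h) hends

theorem path_eq_of_mem_verts {p q : Finset E × V × V} (hp : p ∈ T.paths) (hq : q ∈ T.paths)
    {v : V} (hvp : v ∈ G.verts p.1) (hvq : v ∈ G.verts q.1) : p = q := by
  by_contra hne
  exact Finset.disjoint_left.1 (T.path_vdisj p hp q hq hne) hvp hvq

theorem cycle_mem_of_subset {cs : Finset (Finset E)} {ps : Finset (Finset E × V × V)}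
    (hcs : cs ⊆ T.cycles) (hps : ps ⊆ T.paths) {C : Finset E} (hC : C ∈ T.cycles)
    (hsub : C ⊆ cs.biUnion id ∪ ps.biUnion Prod.fst) : C ∈ cs := by
  obtain ⟨e, he⟩ := (T.cyc_is C hC).nonempty
  rcases Finset.mem_union.1 (hsub he) with he' | he'
  · obtain ⟨C', hC', heC'⟩ := Finset.mem_biUnion.1 he'
    by_cases hCC' : C = C'
    · exact hCC' ▸ hC'
    · exact absurd heC' (Finset.disjoint_left.1 (T.cyc_disj C hC C' (hcs hC') hCC') he)
  · obtain ⟨p, hp, hep⟩ := Finset.mem_biUnion.1 he'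
    exact absurd hep (Finset.disjoint_left.1 (T.cyc_path_disj C hC p (hps hp)) he)

theorem path_mem_of_subset {cs : Finset (Finset E)} {ps : Finset (Finset E × V × V)}
    (hcs : cs ⊆ T.cycles) (hps : ps ⊆ T.paths) {q : Finset E × V × V} (hq : q ∈ T.paths)
    (hsub : q.1 ⊆ cs.biUnion id ∪ ps.biUnion Prod.fst) : q ∈ ps := by
  obtain ⟨e, he⟩ := (T.path_is q hq).nonempty
  rcases Finset.mem_union.1 (hsub he) with he' | he'
  · obtain ⟨C, hC, heC⟩ := Finset.mem_biUnion.1 he'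
    exact absurd he (Finset.disjoint_left.1 (T.cyc_path_disj C (hcs hC) q hq) heC)
  · obtain ⟨p, hp, hep⟩ := Finset.mem_biUnion.1 he'
    rw [T.path_eq_of_mem_verts hq (hps hp) (fst_mem_verts he) (fst_mem_verts hep)]
    exact hp

def restrict (S : Finset E) (cs : Finset (Finset E)) (ps : Finset (Finset E × V × V))
    (hS : S = cs.biUnion id ∪ ps.biUnion Prod.fst) (hcs : cs ⊆ T.cycles)
    (hps : ps ⊆ T.paths) (hne : cs.Nonempty) (hconn : G.ConnectedOn S)
    (hmeets : ∀ p ∈ ps, ∃ C₁ ∈ cs, ∃ C₂ ∈ cs, C₁ ≠ C₂ ∧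
      G.verts C₁ ∩ G.verts p.1 = {p.2.1} ∧ G.verts C₂ ∩ G.verts p.1 = {p.2.2} ∧
      ∀ C ∈ cs, C ≠ C₁ → C ≠ C₂ → G.verts C ∩ G.verts p.1 = ∅)
    (hcuts : ∀ v ∈ G.interVertsOf cs ps, G.IsCutPoint S v) : CycleTree G where
  edges := S
  cycles := cs
  paths := ps
  conn := hconn
  cycles_nonempty := hne
  cyc_is C hC := T.cyc_is C (hcs hC)
  cyc_all C hC hcyc := T.cycle_mem_of_subset hcs hps
    (T.cyc_all C (hC.trans (hS ▸ T.biUnion_subset_edges hcs hps)) hcyc) (hS ▸ hC)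
  path_is p hp := T.path_is p (hps hp)
  partition := hS
  cyc_disj C hC C' hC' := T.cyc_disj C (hcs hC) C' (hcs hC')
  cyc_path_disj C hC p hp := T.cyc_path_disj C (hcs hC) p (hps hp)
  path_vdisj p hp q hq := T.path_vdisj p (hps hp) q (hps hq)
  cyc_meet C hC C' hC' := T.cyc_meet C (hcs hC) C' (hcs hC')
  path_meets := hmeets
  cuts := hcuts

end CycleTree

theorem interVertsOf_singleton (C : Finset E) :
    G.interVertsOf {C} (∅ : Finset (Finset E × V × V)) = ∅ := by
  simp [interVertsOf]

theorem interVertsOf_pair {C₁ C₂ : Finset E} (hne : C₁ ≠ C₂) (ps : Finset (Finset E × V × V)) :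
    G.interVertsOf {C₁, C₂} ps =
      G.verts C₁ ∩ G.verts C₂ ∪ ps.biUnion fun p => {p.2.1, p.2.2} := by
  simp [interVertsOf, Finset.biUnion_insert, hne, hne.symm, Finset.inter_comm]

namespace CycleTree

variable (T : CycleTree G)

/-- At an end `a` of a block path the attached block cycle has a second vertex: otherwise
the only neighbour of `a` in `T` would be its neighbour on the path, and `a` would not be
a cut-point. -/
theorem exists_ne_of_path_end {p : Finset E × V × V} (hp : p ∈ T.paths) {a : V}
    (ha : a = p.2.1 ∨ a = p.2.2) {C : Finset E} (hC : C ∈ T.cycles) (haC : a ∈ G.verts C) :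
    ∃ v ∈ G.verts C, v ≠ a := by
  by_contra! hloop
  have hpath := T.path_is p hp
  have haP : a ∈ G.verts p.1 := by
    rcases ha with rfl | rfl
    exacts [hpath.left_mem_verts, hpath.right_mem_verts]
  obtain ⟨w, hw⟩ := hpath.exists_forall_adjOn ha
  have hnbr : ∀ z, z ≠ a → G.adjOn T.edges a z → z = w := by
    intro z hza hz
    rcases T.adjOn_edges hz with ⟨D, hD, hDz⟩ | ⟨q, hq, hqz⟩
    · obtain rfl := T.cycle_eq_of_mem_verts_path hp haP hD hC (mem_verts_of_adjOn hDz) haC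
      exact absurd (hloop z (mem_verts_of_adjOn (adjOn_symm hDz))) hza
    · obtain rfl := T.path_eq_of_mem_verts hq hp (mem_verts_of_adjOn hqz) haP
      exact hw z hqz
  refine not_isCutPoint_of_reach_adjOnAvoiding (fun z z' hza hz'a hz hz' => ?_)
    (T.cuts a (T.path_end_mem_interVerts hp ha))
  rw [hnbr z hza (adjOn_symm hz), hnbr z' hz'a hz']

/-- Without block paths, a cut-point lies on two block cycles that both pass through a
further vertex: if only one block cycle did, the cut-point could be bypassed along it. -/
theorem exists_cycles_of_isCutPoint (hpe : T.paths = ∅) {a : V}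
    (ha : G.IsCutPoint T.edges a) :
    ∃ B₁ ∈ T.cycles, ∃ B₂ ∈ T.cycles, B₁ ≠ B₂ ∧ a ∈ G.verts B₁ ∧ a ∈ G.verts B₂ ∧
      (∃ x ∈ G.verts B₁, x ≠ a) ∧ ∃ y ∈ G.verts B₂, y ≠ a := by
  by_contra hcon
  have hcycle : ∀ {v w}, G.adjOn T.edges v w → ∃ B ∈ T.cycles, G.adjOn B v w := fun h =>
    (T.adjOn_edges h).resolve_right (by simp [hpe])
  refine not_isCutPoint_of_reach_adjOnAvoiding (fun z w hza hwa hz hw => ?_) ha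
  obtain ⟨B, hB, hBz⟩ := hcycle hz
  obtain ⟨B', hB', hBw⟩ := hcycle hw
  have haB := mem_verts_of_adjOn (adjOn_symm hBz)
  have hzB := mem_verts_of_adjOn hBz
  have hwB' := mem_verts_of_adjOn (adjOn_symm hBw)
  obtain rfl : B = B' := by
    by_contra hne
    exact hcon ⟨B, hB, B', hB', hne, haB, mem_verts_of_adjOn hBw, ⟨z, hzB, hza⟩, ⟨w, hwB', hwa⟩⟩
  exact reach_adjOnAvoiding_mono (T.cycle_subset_edges hB)
    ((T.cyc_is B hB).reach_adjOnAvoiding haB hzB hwB' hza hwa)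

end CycleTree

namespace IsCircuit

variable {T : CycleTree G}

theorem blocks_eq (h : G.IsCircuit T) {cs : Finset (Finset E)} {ps : Finset (Finset E × V × V)}
    (hcs : cs ⊆ T.cycles) (hps : ps ⊆ T.paths) {T' : CycleTree G} (hT' : T'.IsEulerian)
    (hedges : T'.edges = cs.biUnion id ∪ ps.biUnion Prod.fst) :
    T.cycles = cs ∧ T.paths = ps := by
  have hE : T.edges = cs.biUnion id ∪ ps.biUnion Prod.fst :=
    hedges ▸ (h.2 T' hT' (hedges ▸ T.biUnion_subset_edges hcs hps)).symm
  exact ⟨Finset.Subset.antisymm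
      (fun C hC => T.cycle_mem_of_subset hcs hps hC (hE ▸ T.cycle_subset_edges hC)) hcs,
    Finset.Subset.antisymm
      (fun p hp => T.path_mem_of_subset hcs hps hp (hE ▸ T.path_subset_edges hp)) hps⟩

theorem blocks_eq_of_balanced (h : G.IsCircuit T) {C : Finset E} (hC : C ∈ T.cycles)
    (hbal : G.signSet C = 1) : T.cycles = {C} ∧ T.paths = ∅ := by
  have hcs : {C} ⊆ T.cycles := Finset.singleton_subset_iff.2 hC
  have hS : C = ({C} : Finset (Finset E)).biUnion id ∪
      (∅ : Finset (Finset E × V × V)).biUnion Prod.fst := by simp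
  let T' := T.restrict C {C} ∅ hS hcs (Finset.empty_subset _) (Finset.singleton_nonempty C)
    (T.cyc_is C hC).connectedOn (by simp) (by simp [interVertsOf_singleton])
  refine h.blocks_eq hcs (Finset.empty_subset _) (T' := T') ?_ hS
  intro C' hC'
  obtain rfl := Finset.mem_singleton.1 hC'
  simp [T', CycleTree.restrict, CycleTree.interVerts, interVertsOf_singleton, hbal]

theorem blocks_eq_of_verts_inter_eq_singleton (h : G.IsCircuit T) {C₁ C₂ : Finset E}
    (h₁ : C₁ ∈ T.cycles) (h₂ : C₂ ∈ T.cycles) (hne : C₁ ≠ C₂) {w : V}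
    (hw : G.verts C₁ ∩ G.verts C₂ = {w}) {x y : V} (hx : x ∈ G.verts C₁) (hxw : x ≠ w)
    (hy : y ∈ G.verts C₂) (hyw : y ≠ w) (hs₁ : G.signSet C₁ = -1) (hs₂ : G.signSet C₂ = -1) :
    T.cycles = {C₁, C₂} ∧ T.paths = ∅ := by
  have hcs : {C₁, C₂} ⊆ T.cycles := Finset.insert_subset h₁ (Finset.singleton_subset_iff.2 h₂)
  have hS : C₁ ∪ C₂ = ({C₁, C₂} : Finset (Finset E)).biUnion id ∪
      (∅ : Finset (Finset E × V × V)).biUnion Prod.fst := by simp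
  have hw₁₂ := Finset.mem_inter.1 (hw ▸ Finset.mem_singleton_self w)
  have hconn := connectedOn_union (T.cyc_is C₁ h₁).connectedOn (T.cyc_is C₂ h₂).connectedOn
    hw₁₂.1 hw₁₂.2
  have hIV : G.interVertsOf {C₁, C₂} (∅ : Finset (Finset E × V × V)) = {w} := by
    simp [interVertsOf_pair hne, hw]
  let T' := T.restrict (C₁ ∪ C₂) {C₁, C₂} ∅ hS hcs (Finset.empty_subset _)
    (Finset.insert_nonempty _ _) hconn (by simp) fun v hv =>
      (Finset.mem_singleton.1 (hIV ▸ hv)) ▸ isCutPoint_union hconn hw.le hx hy hxw hyw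
  refine h.blocks_eq hcs (Finset.empty_subset _) (T' := T') ?_ hS
  intro C hC
  rcases Finset.mem_insert.1 hC with rfl | hC
  · simp [T', CycleTree.restrict, CycleTree.interVerts, hIV, hs₁, hw₁₂.1]
  · obtain rfl := Finset.mem_singleton.1 hC
    simp [T', CycleTree.restrict, CycleTree.interVerts, hIV, hs₂, hw₁₂.2]

theorem blocks_eq_of_path (h : G.IsCircuit T) {C₁ C₂ : Finset E} (h₁ : C₁ ∈ T.cycles)
    (h₂ : C₂ ∈ T.cycles) (hne : C₁ ≠ C₂) {p : Finset E × V × V} (hp : p ∈ T.paths)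
    (hm₁ : G.verts C₁ ∩ G.verts p.1 = {p.2.1}) (hm₂ : G.verts C₂ ∩ G.verts p.1 = {p.2.2})
    (hdisj : G.verts C₁ ∩ G.verts C₂ = ∅) {x y : V} (hx : x ∈ G.verts C₁) (hxa : x ≠ p.2.1)
    (hy : y ∈ G.verts C₂) (hyb : y ≠ p.2.2) (hs₁ : G.signSet C₁ = -1)
    (hs₂ : G.signSet C₂ = -1) : T.cycles = {C₁, C₂} ∧ T.paths = {p} := by
  have hcs : {C₁, C₂} ⊆ T.cycles := Finset.insert_subset h₁ (Finset.singleton_subset_iff.2 h₂)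
  have hps : {p} ⊆ T.paths := Finset.singleton_subset_iff.2 hp
  have hS : C₁ ∪ (p.1 ∪ C₂) = ({C₁, C₂} : Finset (Finset E)).biUnion id ∪
      ({p} : Finset (Finset E × V × V)).biUnion Prod.fst := by
    simp only [Finset.biUnion_insert, Finset.singleton_biUnion, id]
    ac_rfl
  have ha := Finset.mem_inter.1 (hm₁ ▸ Finset.mem_singleton_self p.2.1)
  have hb := Finset.mem_inter.1 (hm₂ ▸ Finset.mem_singleton_self p.2.2)
  have hconn : G.ConnectedOn (C₁ ∪ (p.1 ∪ C₂)) :=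
    connectedOn_union (T.cyc_is C₁ h₁).connectedOn
      (connectedOn_union (T.path_is p hp).connectedOn (T.cyc_is C₂ h₂).connectedOn hb.2 hb.1)
      ha.1 (by rw [verts_union]; exact Finset.mem_union_left _ ha.2)
  have hIV : G.interVertsOf {C₁, C₂} {p} = {p.2.1, p.2.2} := by
    simp [interVertsOf_pair hne, hdisj]
  have hcuts : ∀ v ∈ G.interVertsOf {C₁, C₂} {p}, G.IsCutPoint (C₁ ∪ (p.1 ∪ C₂)) v := by
    intro v hv
    rw [hIV, Finset.mem_insert, Finset.mem_singleton] at hv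
    rcases hv with rfl | rfl
    · exact isCutPoint_union_union hconn hm₁ hdisj hx hxa hy
    · rw [show C₁ ∪ (p.1 ∪ C₂) = C₂ ∪ (p.1 ∪ C₁) by ac_rfl] at hconn ⊢
      exact isCutPoint_union_union hconn hm₂ (by rw [Finset.inter_comm, hdisj]) hy hyb hx
  let T' := T.restrict (C₁ ∪ (p.1 ∪ C₂)) {C₁, C₂} {p} hS hcs hps (Finset.insert_nonempty _ _)
    hconn (fun q hq => by
      obtain rfl := Finset.mem_singleton.1 hq
      exact ⟨C₁, by simp, C₂, by simp, hne, hm₁, hm₂, fun C hC hC₁ hC₂ => by simp_all⟩) hcuts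
  refine h.blocks_eq hcs hps (T' := T') ?_ hS
  have hb₁ : p.2.2 ∉ G.verts C₁ := fun hb₁ =>
    Finset.notMem_empty _ (hdisj ▸ Finset.mem_inter.2 ⟨hb₁, hb.1⟩)
  have ha₂ : p.2.1 ∉ G.verts C₂ := fun ha₂ =>
    Finset.notMem_empty _ (hdisj ▸ Finset.mem_inter.2 ⟨ha.1, ha₂⟩)
  intro C hC
  rcases Finset.mem_insert.1 hC with rfl | hC
  · simp [T', CycleTree.restrict, CycleTree.interVerts, hIV, hs₁, ha.1, hb₁]
  · obtain rfl := Finset.mem_singleton.1 hC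
    simp [T', CycleTree.restrict, CycleTree.interVerts, hIV, hs₂, ha₂, hb.1]

end IsCircuit

namespace IsCircuit

variable {T : CycleTree G}

theorem typeII_of_paths_eq_empty (h : G.IsCircuit T)
    (hunb : ∀ C ∈ T.cycles, G.signSet C = -1) (hpe : T.paths = ∅) : T.TypeII := by
  obtain ⟨C₀, hC₀⟩ := T.cycles_nonempty
  -- the parity condition puts an intersection vertex, hence a cut-point, on `C₀`
  obtain ⟨a, ha⟩ : (G.verts C₀ ∩ T.interVerts).Nonempty := by
    have hodd := h.1 C₀ hC₀
    rw [hunb C₀ hC₀, if_neg (by decide)] at hodd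
    exact Finset.card_pos.1 hodd.pos
  obtain ⟨B₁, hB₁, B₂, hB₂, hne, ha₁, ha₂, ⟨x, hx, hxa⟩, y, hy, hya⟩ :=
    T.exists_cycles_of_isCutPoint hpe (T.cuts a (Finset.mem_inter.1 ha).2)
  have hw := T.verts_inter_eq_singleton hB₁ hB₂ hne (Finset.mem_inter.2 ⟨ha₁, ha₂⟩)
  obtain ⟨hcycles, hpaths⟩ := h.blocks_eq_of_verts_inter_eq_singleton hB₁ hB₂ hne hw hx hxa
    hy hya (hunb B₁ hB₁) (hunb B₂ hB₂)
  exact ⟨B₁, B₂, hne, hcycles, hpaths, hunb B₁ hB₁, hunb B₂ hB₂, by rw [hw, Finset.card_singleton]⟩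

theorem typeIII_of_mem_paths (h : G.IsCircuit T) (hunb : ∀ C ∈ T.cycles, G.signSet C = -1)
    {p : Finset E × V × V} (hp : p ∈ T.paths) : T.TypeIII := by
  obtain ⟨C₁, h₁, C₂, h₂, hne, hm₁, hm₂, -⟩ := T.path_meets p hp
  have ha := Finset.mem_inter.1 (hm₁ ▸ Finset.mem_singleton_self p.2.1)
  have hb := Finset.mem_inter.1 (hm₂ ▸ Finset.mem_singleton_self p.2.2)
  obtain ⟨x, hx, hxa⟩ := T.exists_ne_of_path_end hp (Or.inl rfl) h₁ ha.1
  obtain ⟨y, hy, hyb⟩ := T.exists_ne_of_path_end hp (Or.inr rfl) h₂ hb.1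
  rcases (G.verts C₁ ∩ G.verts C₂).eq_empty_or_nonempty with hdisj | ⟨w, hw⟩
  · obtain ⟨hcycles, hpaths⟩ := h.blocks_eq_of_path h₁ h₂ hne hp hm₁ hm₂ hdisj hx hxa hy hyb
      (hunb C₁ h₁) (hunb C₂ h₂)
    exact ⟨C₁, C₂, p, hne, hcycles, hpaths, hunb C₁ h₁, hunb C₂ h₂, hdisj⟩
  -- two block cycles meeting at `w` would already form a smaller Eulerian cycle-tree
  exfalso
  have hends := (T.path_is p hp).ne
  have hw₁₂ := Finset.mem_inter.1 hw
  have haw : p.2.1 ≠ w := fun haw =>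
    hends (Finset.mem_singleton.1 (hm₂ ▸ Finset.mem_inter.2 ⟨haw ▸ hw₁₂.2, ha.2⟩))
  have hbw : p.2.2 ≠ w := fun hbw =>
    hends (Finset.mem_singleton.1 (hm₁ ▸ Finset.mem_inter.2 ⟨hbw ▸ hw₁₂.1, hb.2⟩)).symm
  obtain ⟨-, hpe⟩ := h.blocks_eq_of_verts_inter_eq_singleton h₁ h₂ hne
    (T.verts_inter_eq_singleton h₁ h₂ hne hw) ha.1 haw hb.1 hbw (hunb C₁ h₁) (hunb C₂ h₂)
  exact Finset.notMem_empty p (hpe ▸ hp)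

theorem typeI_or_typeII_or_typeIII (h : G.IsCircuit T) : T.TypeI ∨ T.TypeII ∨ T.TypeIII := by
  by_cases hbal : ∃ C ∈ T.cycles, G.signSet C = 1
  · obtain ⟨C, hC, hs⟩ := hbal
    obtain ⟨hcycles, hpaths⟩ := h.blocks_eq_of_balanced hC hs
    exact Or.inl ⟨C, hcycles, hpaths, hs⟩
  have hunb : ∀ C ∈ T.cycles, G.signSet C = -1 := fun C hC =>
    (signSet_eq_one_or_neg_one C).resolve_left fun hs => hbal ⟨C, hC, hs⟩
  rcases T.paths.eq_empty_or_nonempty with hpe | ⟨p, hp⟩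
  · exact Or.inr (Or.inl (h.typeII_of_paths_eq_empty hunb hpe))
  · exact Or.inr (Or.inr (h.typeIII_of_mem_paths hunb hp))

end IsCircuit

namespace CycleTree

variable {T : CycleTree G}

theorem TypeI.card_cycles (hT : T.TypeI) : T.cycles.card = 1 := by
  obtain ⟨C, hC, -⟩ := hT
  rw [hC, Finset.card_singleton]

theorem TypeII.card_cycles (hT : T.TypeII) : T.cycles.card = 2 := by
  obtain ⟨C₁, C₂, hne, hC, -⟩ := hT
  rw [hC, Finset.card_pair hne]

theorem TypeIII.card_cycles (hT : T.TypeIII) : T.cycles.card = 2 := by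
  obtain ⟨C₁, C₂, P, hne, hC, -⟩ := hT
  rw [hC, Finset.card_pair hne]

theorem TypeI.not_typeII (hT : T.TypeI) : ¬ T.TypeII := fun h =>
  absurd (hT.card_cycles.symm.trans h.card_cycles) (by decide)

theorem TypeI.not_typeIII (hT : T.TypeI) : ¬ T.TypeIII := fun h =>
  absurd (hT.card_cycles.symm.trans h.card_cycles) (by decide)

theorem TypeII.not_typeIII (hT : T.TypeII) : ¬ T.TypeIII := by
  obtain ⟨-, -, -, -, hpe, -⟩ := hT
  rintro ⟨-, -, P, -, -, hP, -⟩
  exact Finset.singleton_ne_empty P (hP.symm.trans hpe)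

end CycleTree

end OSG

theorem OSG.circuit_classification_general
    {V E : Type} [DecidableEq V] [DecidableEq E] {G : OSG V E}
    (T : OSG.CycleTree G) (h : OSG.IsCircuit G T) :
    (T.TypeI ∧ ¬ T.TypeII ∧ ¬ T.TypeIII) ∨
    (¬ T.TypeI ∧ T.TypeII ∧ ¬ T.TypeIII) ∨
    (¬ T.TypeI ∧ ¬ T.TypeII ∧ T.TypeIII) := by
  rcases h.typeI_or_typeII_or_typeIII with hI | hII | hIII
  · exact Or.inl ⟨hI, hI.not_typeII, hI.not_typeIII⟩
  · exact Or.inr (Or.inl ⟨fun hI => hI.not_typeII hII, hII, hII.not_typeIII⟩)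
  · exact Or.inr (Or.inr ⟨fun hI => hI.not_typeIII hIII, fun hII => hII.not_typeIII hIII, hIII⟩)

/-- every signed-graph circuit is of exactly one of Types I, II, III. -/
theorem OSG.circuit_classification
    {V E : Type} [DecidableEq V] [DecidableEq E] [Fintype E] {G : OSG V E}
    (T : OSG.CycleTree G) (h : OSG.IsCircuit G T) :
    (T.TypeI ∧ ¬ T.TypeII ∧ ¬ T.TypeIII) ∨
    (¬ T.TypeI ∧ T.TypeII ∧ ¬ T.TypeIII) ∨
    (¬ T.TypeI ∧ ¬ T.TypeII ∧ T.TypeIII) :=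
  OSG.circuit_classification_general T h
end
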